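/- arXiv:2512.11304 — 3 statements merged into one kernel-verified Lean document; each statement's English description precedes it below -/
import Mathlib

section
/- For every natural number q ≥ 1, ∑_{k=1}^{⌊q/2⌋} (-1)^k · 2^{q-2k} · binom(q - k - 1, k - 1) = -(q - 1). -/
private def g (m : ℕ) : ℤ :=
  ∑ j ∈ Finset.range (m / 2 + 1),
    (-1 : ℤ) ^ j * 2 ^ (m - 2 * j) * ((m - j).choose j : ℤ)

private lemma g_rec (m : ℕ) : g (m + 2) + g m = 2 * g (m + 1) := by
  set A : ℤ := ∑ j ∈ Finset.range (m / 2 + 1),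
      (-1 : ℤ) ^ (j+1) * 2 ^ (m - 2 * j) * ((m - j).choose (j+1) : ℤ) with hAdef
  have hA : g (m + 2) = -g m + A + 2 ^ (m + 2) := by
    unfold g
    have h1 : (m + 2) / 2 + 1 = (m / 2 + 1) + 1 := by omega
    rw [h1, Finset.sum_range_succ']
    have key1 : ∑ j ∈ Finset.range (m / 2 + 1),
        (-1 : ℤ) ^ (j+1) * 2 ^ (m + 2 - 2 * (j+1)) * (((m + 2 - (j+1)).choose (j+1) : ℤ))
        = (∑ j ∈ Finset.range (m / 2 + 1),
            (-((-1 : ℤ) ^ j * 2 ^ (m - 2 * j) * ((m - j).choose j : ℤ))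
              + (-1 : ℤ) ^ (j+1) * 2 ^ (m - 2 * j) * ((m - j).choose (j+1) : ℤ))) := by
      apply Finset.sum_congr rfl
      intro j hj
      have hj' : 2 * j ≤ m := by
        have := Finset.mem_range.mp hj; omega
      have e1 : m + 2 - 2 * (j + 1) = m - 2 * j := by omega
      have e2 : m + 2 - (j + 1) = (m - j) + 1 := by omega
      rw [e1, e2, Nat.choose_succ_succ']
      push_cast
      ring
    rw [key1, Finset.sum_add_distrib, Finset.sum_neg_distrib]
    simp [hAdef]
  have hB : 2 * g (m + 1) = A + 2 ^ (m + 2) := by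
    unfold g
    rw [Finset.sum_range_succ', mul_add, Finset.mul_sum]
    have key2 : ∑ j ∈ Finset.range ((m + 1) / 2),
        2 * ((-1 : ℤ) ^ (j+1) * 2 ^ (m + 1 - 2 * (j+1)) * (((m + 1 - (j+1)).choose (j+1) : ℤ)))
        = A := by
      have step : ∑ j ∈ Finset.range ((m + 1) / 2),
          2 * ((-1 : ℤ) ^ (j+1) * 2 ^ (m + 1 - 2 * (j+1)) * (((m + 1 - (j+1)).choose (j+1) : ℤ)))
          = ∑ j ∈ Finset.range ((m + 1) / 2),
          (-1 : ℤ) ^ (j+1) * 2 ^ (m - 2 * j) * ((m - j).choose (j+1) : ℤ) := by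
        apply Finset.sum_congr rfl
        intro j hj
        have hj' : 2 * j + 1 ≤ m := by
          have := Finset.mem_range.mp hj; omega
        have e1 : m + 1 - 2 * (j + 1) = m - (2 * j + 1) := by omega
        have e2 : m + 1 - (j + 1) = m - j := by omega
        have e3 : m - 2 * j = (m - (2 * j + 1)) + 1 := by omega
        rw [e1, e2, e3, pow_succ]
        ring
      rw [step, hAdef]
      apply Finset.sum_subset
      · intro x hx
        simp only [Finset.mem_range] at *
        omega
      · intro x hx hx'
        simp only [Finset.mem_range] at *
        have hm : 2 * x ≤ m ∧ (m + 1) / 2 ≤ x := ⟨by omega, by omega⟩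
        have : m - x < x + 1 := by omega
        rw [Nat.choose_eq_zero_of_lt this]
        simp
    rw [key2]
    norm_num
    ring
  rw [hA, hB]
  ring

private lemma g_eq (m : ℕ) : g m = m + 1 := by
  have H : ∀ n, g n = n + 1 ∧ g (n + 1) = n + 2 := by
    intro n
    induction n with
    | zero =>
      constructor <;> simp [g, Finset.sum_range_succ]
    | succ k ih =>
      refine ⟨ih.2, ?_⟩
      have hr := g_rec k
      push_cast
      push_cast at ih
      linarith [ih.1, ih.2]
  exact (H m).1

theorem stmt_13 (q : ℕ) (hq : 1 ≤ q) :
    ∑ k ∈ Finset.Icc 1 (q / 2),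
      (-1 : ℤ) ^ k * 2 ^ (q - 2 * k) * ((q - k - 1).choose (k - 1) : ℤ)
      = -((q : ℤ) - 1) := by
  match q, hq with
  | 1, _ => simp
  | (m + 2), _ =>
    have hIcc : ∑ k ∈ Finset.Icc 1 ((m + 2) / 2),
        (-1 : ℤ) ^ k * 2 ^ (m + 2 - 2 * k) * ((m + 2 - k - 1).choose (k - 1) : ℤ)
        = ∑ j ∈ Finset.range (m / 2 + 1),
          (-1 : ℤ) ^ (1 + j) * 2 ^ (m + 2 - 2 * (1 + j)) * ((m + 2 - (1 + j) - 1).choose ((1 + j) - 1) : ℤ) := by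
      rw [← Finset.Ico_add_one_right_eq_Icc, Finset.sum_Ico_eq_sum_range]
      have : (m + 2) / 2 + 1 - 1 = m / 2 + 1 := by omega
      rw [this]
    rw [hIcc]
    have : ∑ j ∈ Finset.range (m / 2 + 1),
        (-1 : ℤ) ^ (1 + j) * 2 ^ (m + 2 - 2 * (1 + j)) * ((m + 2 - (1 + j) - 1).choose ((1 + j) - 1) : ℤ)
        = -g m := by
      rw [g, ← Finset.sum_neg_distrib]
      apply Finset.sum_congr rfl
      intro j hj
      have hj' : 2 * j ≤ m := by
        have := Finset.mem_range.mp hj; omega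
      have e1 : m + 2 - 2 * (1 + j) = m - 2 * j := by omega
      have e2 : m + 2 - (1 + j) - 1 = m - j := by omega
      have e3 : (1 + j) - 1 = j := by omega
      rw [e1, e2, e3]
      ring
    rw [this, g_eq]
    push_cast
    ring
end

section
/- For every integer n ≥ 1, ∑_{k=⌈n/2⌉}^{n} (-1)^{k-1} · (k-1)! · 2^{2k-n} · n! / ((2k-n)! · (n-k)!) = 2 · (-1)^{n-1} · (n-1)!. -/
/-- Guarded summand: the term of the sum, zero outside the support. -/
def tt (n k : ℕ) : ℚ :=
  if n ≤ 2 * k ∧ k ≤ n then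
    (-1 : ℚ) ^ (k - 1) * (k - 1).factorial * 2 ^ (2 * k - n) * n.factorial
      / ((2 * k - n).factorial * (n - k).factorial)
  else 0

/-- WZ certificate. -/
def gg (n k : ℕ) : ℚ :=
  if n + 2 ≤ 2 * k ∧ k ≤ n + 1 then
    (-1 : ℚ) ^ k * (k - 1).factorial * 2 ^ (2 * k - n - 1) * n.factorial
      / ((2 * k - n - 2).factorial * (n + 1 - k).factorial)
  else 0

lemma tt_zero {n k : ℕ} (h : ¬(n ≤ 2 * k ∧ k ≤ n)) : tt n k = 0 := if_neg h

lemma gg_zero {n k : ℕ} (h : ¬(n + 2 ≤ 2 * k ∧ k ≤ n + 1)) : gg n k = 0 := if_neg h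

lemma tt_eq' (n k j m p : ℕ) (h1 : n = 2 * j + m) (h2 : k = j + m) (h3 : k = p + 1) :
    tt n k = (-1 : ℚ) ^ p * p.factorial * 2 ^ m * n.factorial
      / (m.factorial * j.factorial) := by
  subst h1; subst h2
  have hg : 2 * j + m ≤ 2 * (j + m) ∧ j + m ≤ 2 * j + m := ⟨by omega, by omega⟩
  unfold tt
  rw [if_pos hg,
    show 2 * (j + m) - (2 * j + m) = m from by omega,
    show 2 * j + m - (j + m) = j from by omega,
    show j + m - 1 = p from by omega]

lemma gg_eq' (n k j m p : ℕ) (h1 : n = 2 * j + m) (h2 : k = j + m + 1) (h3 : k = p + 1) :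
    gg n k = (-1 : ℚ) ^ (p + 1) * p.factorial * 2 ^ (m + 1) * n.factorial
      / (m.factorial * j.factorial) := by
  subst h1; subst h2
  have hg : 2 * j + m + 2 ≤ 2 * (j + m + 1) ∧ j + m + 1 ≤ 2 * j + m + 1 := ⟨by omega, by omega⟩
  unfold gg
  rw [if_pos hg,
    show 2 * (j + m + 1) - (2 * j + m) - 1 = m + 1 from by omega,
    show 2 * (j + m + 1) - (2 * j + m) - 2 = m from by omega,
    show 2 * j + m + 1 - (j + m + 1) = j from by omega,
    show j + m + 1 - 1 = p from by omega,
    show j + m + 1 = p + 1 from h3]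

lemma wz (n k : ℕ) (hn : 1 ≤ n) :
    tt (n + 1) k + n * tt n k = gg n (k + 1) - gg n k := by
  have hfac : ∀ q : ℕ, ((q.factorial : ℚ)) ≠ 0 :=
    fun q => Nat.cast_ne_zero.mpr q.factorial_ne_zero
  rcases lt_or_ge (2 * k) n with h | h
  · rw [tt_zero (by omega), tt_zero (by omega), gg_zero (by omega), gg_zero (by omega)]
    ring
  rcases lt_or_ge (n + 1) k with h2 | h2
  · rw [tt_zero (by omega), tt_zero (by omega), gg_zero (by omega), gg_zero (by omega)]
    ring
  by_cases hk : k = n + 1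
  · subst hk
    rw [tt_eq' (n + 1) (n + 1) 0 (n + 1) n (by omega) (by omega) (by omega),
      gg_eq' n (n + 1) 0 n n (by omega) (by omega) (by omega),
      tt_zero (by omega), gg_zero (by omega)]
    have h1 := hfac n
    have h2 := hfac (n + 1)
    simp only [Nat.factorial_succ, Nat.factorial_zero]
    push_cast
    field_simp
    ring
  · have hk' : k ≤ n := by omega
    rcases (by omega : 2 * k = n ∨ 2 * k = n + 1 ∨ n + 2 ≤ 2 * k) with hm | hm | hm
    · -- m = 0 : n = 2i+2, k = i+1
      obtain ⟨i, rfl⟩ : ∃ i, k = i + 1 := ⟨k - 1, by omega⟩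
      rw [tt_eq' n (i + 1) (i + 1) 0 i (by omega) (by omega) rfl,
        gg_eq' n (i + 1 + 1) (i + 1) 0 (i + 1) (by omega) (by omega) rfl,
        tt_zero (by omega), gg_zero (by omega)]
      have hnq : (n : ℚ) = 2 * (i : ℚ) + 2 := by
        have hh : n = 2 * i + 2 := by omega
        rw [hh]; push_cast; ring
      have h1 := hfac i
      have h2 := hfac n
      simp only [Nat.factorial_succ, Nat.factorial_zero]
      push_cast
      rw [hnq]
      field_simp
      ring
    · -- m = 1 : n = 2j+1, k = j+1
      obtain ⟨j, rfl⟩ : ∃ j, k = j + 1 := ⟨k - 1, by omega⟩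
      rw [tt_eq' (n + 1) (j + 1) (j + 1) 0 j (by omega) (by omega) rfl,
        tt_eq' n (j + 1) j 1 j (by omega) (by omega) rfl,
        gg_eq' n (j + 1 + 1) j 1 (j + 1) (by omega) (by omega) rfl,
        gg_zero (by omega)]
      have hnq : (n : ℚ) = 2 * (j : ℚ) + 1 := by
        have hh : n = 2 * j + 1 := by omega
        rw [hh]; push_cast; ring
      have h1 := hfac j
      have h2 := hfac n
      have h3 := hfac (n + 1)
      simp only [Nat.factorial_succ, Nat.factorial_zero, Nat.factorial_one]
      push_cast
      rw [hnq]
      field_simp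
      ring
    · -- m ≥ 2 : n = 2j+c+2, k = j+c+2
      obtain ⟨j, c, rfl, rfl⟩ : ∃ j c, k = j + (c + 1 + 1) ∧ n = 2 * j + (c + 1 + 1) :=
        ⟨n - k, 2 * k - n - 2, by omega, by omega⟩
      rw [tt_eq' (2 * j + (c + 1 + 1) + 1) (j + (c + 1 + 1)) (j + 1) (c + 1) (j + c + 1)
            (by omega) (by omega) (by omega),
        tt_eq' (2 * j + (c + 1 + 1)) (j + (c + 1 + 1)) j (c + 1 + 1) (j + c + 1)
            (by omega) (by omega) (by omega),
        gg_eq' (2 * j + (c + 1 + 1)) (j + (c + 1 + 1) + 1) j (c + 1 + 1) (j + c + 1 + 1)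
            (by omega) (by omega) (by omega),
        gg_eq' (2 * j + (c + 1 + 1)) (j + (c + 1 + 1)) (j + 1) c (j + c + 1)
            (by omega) (by omega) (by omega)]
      have h1 := hfac c
      have h2 := hfac j
      have h3 := hfac (2 * j + (c + 1 + 1))
      have h4 := hfac (j + c + 1)
      simp only [Nat.factorial_succ]
      push_cast
      field_simp
      ring

lemma sum_step (n : ℕ) (hn : 1 ≤ n) :
    ∑ k ∈ Finset.range (n + 1 + 1), tt (n + 1) k
      = -(n : ℚ) * ∑ k ∈ Finset.range (n + 1 + 1), tt n k := by
  have key : ∑ k ∈ Finset.range (n + 1 + 1), (tt (n + 1) k + n * tt n k) = 0 := by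
    rw [Finset.sum_congr rfl (fun k _ => wz n k hn),
      Finset.sum_range_sub (fun k => gg n k),
      gg_zero (by omega), gg_zero (by omega), sub_zero]
  rw [Finset.sum_add_distrib, ← Finset.mul_sum] at key
  linarith

lemma main_sum (n : ℕ) (hn : 1 ≤ n) :
    ∑ k ∈ Finset.range (n + 1), tt n k
      = 2 * (-1 : ℚ) ^ (n - 1) * (n - 1).factorial := by
  induction n with
  | zero => omega
  | succ m ih =>
    rcases Nat.eq_or_lt_of_le hn with hm | hm
    · have hm0 : m = 0 := by omega
      subst hm0
      norm_num [Finset.sum_range_succ, tt]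
    · have hm1 : 1 ≤ m := by omega
      have hs := sum_step m hm1
      have hz : ∑ k ∈ Finset.range (m + 1 + 1), tt m k
          = ∑ k ∈ Finset.range (m + 1), tt m k := by
        rw [Finset.sum_range_succ, tt_zero (by omega), add_zero]
      rw [hz, ih hm1] at hs
      rw [hs]
      obtain ⟨i, rfl⟩ : ∃ i, m = i + 1 := ⟨m - 1, by omega⟩
      simp only [Nat.add_sub_cancel, Nat.factorial_succ]
      push_cast
      ring

theorem stmt_14 (n : ℕ) (hn : 1 ≤ n) :
    ∑ k ∈ Finset.Icc ((n + 1) / 2) n,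
      (-1 : ℚ) ^ (k - 1) * (k - 1).factorial * 2 ^ (2 * k - n) * n.factorial
        / ((2 * k - n).factorial * (n - k).factorial)
      = 2 * (-1 : ℚ) ^ (n - 1) * (n - 1).factorial := by
  have h1 : ∀ k ∈ Finset.Icc ((n + 1) / 2) n,
      (-1 : ℚ) ^ (k - 1) * (k - 1).factorial * 2 ^ (2 * k - n) * n.factorial
        / ((2 * k - n).factorial * (n - k).factorial) = tt n k := by
    intro k hk
    rw [Finset.mem_Icc] at hk
    have hg : n ≤ 2 * k ∧ k ≤ n := ⟨by omega, hk.2⟩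
    unfold tt
    rw [if_pos hg]
  have hsub : Finset.Icc ((n + 1) / 2) n ⊆ Finset.range (n + 1) := by
    intro k hk
    rw [Finset.mem_Icc] at hk
    exact Finset.mem_range.mpr (by omega)
  have hzero : ∀ k ∈ Finset.range (n + 1), k ∉ Finset.Icc ((n + 1) / 2) n → tt n k = 0 := by
    intro k hk hk2
    rw [Finset.mem_range] at hk
    rw [Finset.mem_Icc, not_and_or] at hk2
    exact tt_zero (by omega)
  rw [Finset.sum_congr rfl h1, Finset.sum_subset hsub hzero]
  exact main_sum n hn
end

section
/- For every integer n ≥ 1, ∑_{k=⌈n/2⌉}^{n} (-1)^k · k! · 2^{2k-n} · n! / ((2k-n)! · (n-k)!) = (-1)^n · (n+1)!. -/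
/-!
After the substitution `j = n - k`, the summand becomes `(-1)ⁿ n! (-1)ʲ C(n-j, j) 2^(n-2j)`, so the
sum is `(-1)ⁿ n!` times the classical expansion of the Chebyshev polynomial `U_n` at `x = 1`.
That expansion satisfies the same three-term recurrence as `U_n` by Pascal's rule, and
`U_n(1) = n + 1`.
-/

open Finset Polynomial

lemma cast_choose_succ_mul_pow_sub {R : Type*} [Semiring R] (y : R) (a b : ℕ) :
    (a.choose (b + 1) : R) * y ^ (a - b) = a.choose (b + 1) * (y * y ^ (a - (b + 1))) := by
  rcases lt_or_ge b a with hba | hab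
  · rw [← pow_succ', Nat.sub_succ', Nat.sub_add_cancel (Nat.sub_pos_of_lt hba)]
  · simp [Nat.choose_eq_zero_of_lt (Nat.lt_succ_of_le hab)]

namespace Polynomial.Chebyshev

variable {R : Type*} [CommRing R]

/-- The classical expansion `U_n(x) = ∑ⱼ (-1)ʲ C(n-j, j) (2x)^(n-2j)` in the variable `y = 2x`,
indexed by the pairs `(n - j, j)`. -/
def USum (y : R) (n : ℕ) : R :=
  ∑ p ∈ antidiagonal n, (-1) ^ p.2 * (p.1.choose p.2 : R) * y ^ (p.1 - p.2)

lemma USum_add_two (y : R) (n : ℕ) : USum y (n + 2) = y * USum y (n + 1) - USum y n := by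
  have pascal (a b : ℕ) : (-1) ^ (b + 1) * ((a + 1).choose (b + 1) : R) * y ^ (a + 1 - (b + 1)) =
      y * ((-1) ^ (b + 1) * a.choose (b + 1) * y ^ (a - (b + 1))) -
        (-1) ^ b * a.choose b * y ^ (a - b) := by
    rw [Nat.choose_succ_succ', Nat.add_sub_add_right, Nat.cast_add, pow_succ]
    linear_combination -(-1) ^ b * cast_choose_succ_mul_pow_sub y a b
  simp only [USum]
  rw [Nat.sum_antidiagonal_succ', Nat.sum_antidiagonal_succ, Nat.sum_antidiagonal_succ',
    sum_congr rfl fun p _ => pascal p.1 p.2, sum_sub_distrib, ← mul_sum]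
  simp [pow_succ]
  ring

theorem U_eval_eq_USum (x : R) (n : ℕ) : (U R n).eval x = USum (2 * x) n := by
  induction n using Nat.twoStepInduction with
  | zero => simp [USum]
  | one => simp [USum, Nat.sum_antidiagonal_succ]
  | more n ih₀ ih₁ =>
    push_cast at ih₁ ⊢
    rw [U_add_two, USum_add_two, eval_sub, eval_mul, eval_mul, ih₀, ih₁]
    simp

end Polynomial.Chebyshev

open Polynomial.Chebyshev Nat

lemma neg_one_pow_eq_mul_neg_one_pow_sub {R : Type*} [Monoid R] [HasDistribNeg R] {k n : ℕ}
    (h : k ≤ n) : (-1 : R) ^ k = (-1) ^ n * (-1) ^ (n - k) := by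
  rw [← pow_add, show n + (n - k) = k + 2 * (n - k) by omega, pow_add, pow_mul, neg_one_sq,
    one_pow, mul_one]

theorem stmt_15_general (n : ℕ) :
    ∑ k ∈ Finset.Icc ((n + 1) / 2) n,
      (-1 : ℚ) ^ k * k.factorial * 2 ^ (2 * k - n) * n.factorial
        / ((2 * k - n).factorial * (n - k).factorial)
      = (-1 : ℚ) ^ n * (n + 1).factorial := by
  have hterm : ∀ k ∈ Icc ((n + 1) / 2) n,
      (-1 : ℚ) ^ k * k ! * 2 ^ (2 * k - n) * n ! / ((2 * k - n)! * (n - k)!) =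
        (-1) ^ n * n ! * ((-1) ^ (n - k) * k.choose (n - k) * (2 * 1) ^ (k - (n - k))) := by
    intro k hk
    obtain ⟨hlo, hkn⟩ := mem_Icc.mp hk
    rw [cast_choose ℚ (by omega : n - k ≤ k), show k - (n - k) = 2 * k - n by omega,
      neg_one_pow_eq_mul_neg_one_pow_sub hkn]
    field_simp
  have hvanish : ∀ k ∈ range (n + 1), k ∉ Icc ((n + 1) / 2) n →
      (-1 : ℚ) ^ (n - k) * k.choose (n - k) * (2 * 1) ^ (k - (n - k)) = 0 := by
    intro k _ hk
    rw [choose_eq_zero_of_lt (by grind), cast_zero, mul_zero, zero_mul]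
  rw [sum_congr rfl hterm, ← mul_sum, sum_subset (fun k hk => by grind) hvanish,
    ← Nat.sum_antidiagonal_eq_sum_range_succ
      (fun a b => (-1 : ℚ) ^ b * (a.choose b : ℚ) * (2 * 1) ^ (a - b)),
    ← USum, ← U_eval_eq_USum, U_eval_one, factorial_succ]
  push_cast
  ring

theorem stmt_15 (n : ℕ) (hn : 1 ≤ n) :
    ∑ k ∈ Finset.Icc ((n + 1) / 2) n,
      (-1 : ℚ) ^ k * k.factorial * 2 ^ (2 * k - n) * n.factorial
        / ((2 * k - n).factorial * (n - k).factorial)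
      = (-1 : ℚ) ^ n * (n + 1).factorial :=
  stmt_15_general n
end
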